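/- Let (X, P, o) be a generalized parametric metric space. Then (X, τ_P) is a T1 space: for distinct points a, b ∈ X, there exist open sets U ∋ a and V ∋ b with b ∉ U and a ∉ V. -/
import Mathlib


open Set Filter Topology

/-- Open sets of the topology `τ_P` induced by a generalized parametric metric. -/
def IsOpenP {X : Type*} (P : X → X → ℝ → NNReal) (A : Set X) : Prop :=
  ∀ a ∈ A, ∃ α : NNReal, 0 < α ∧ ∃ t : ℝ, 0 < t ∧ {b | P a b t < α} ⊆ A

theorem stmt8 {X : Type*} (P : X → X → ℝ → NNReal) (o : NNReal → NNReal → NNReal)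
    (ho_id : ∀ a : NNReal, o a 0 = a)
    (ho_mono : ∀ a b c : NNReal, a ≤ b → o a c ≤ o b c)
    (ho_comm : ∀ a b : NNReal, o a b = o b a)
    (ho_assoc : ∀ a b c : NNReal, o a (o b c) = o (o a b) c)
    (hP1 : ∀ a b : X, (∀ t : ℝ, 0 < t → P a b t = 0) ↔ a = b)
    (hP2 : ∀ a b : X, ∀ t : ℝ, 0 < t → P a b t = P b a t)
    (hP3 : ∀ a b x : X, ∀ s t : ℝ, 0 < s → 0 < t → P a b (s + t) ≤ o (P a x s) (P b x t))
    :
    ∀ a b : X, a ≠ b → ∃ U V : Set X,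
      IsOpenP P U ∧ IsOpenP P V ∧ a ∈ U ∧ b ∈ V ∧ b ∉ U ∧ a ∉ V := by
  have hopen : ∀ c : X, IsOpenP P {c}ᶜ := by
    intro c x hx
    have hxc : x ≠ c := hx
    have : ¬ ∀ t : ℝ, 0 < t → P x c t = 0 := fun h => hxc ((hP1 x c).1 h)
    push_neg at this
    obtain ⟨t, ht, hne⟩ := this
    exact ⟨P x c t, pos_iff_ne_zero.2 hne, t, ht,
      fun y hy hyc => absurd hy (by simp [Set.mem_singleton_iff.1 hyc, lt_irrefl])⟩
  intro a b hab
  exact ⟨{b}ᶜ, {a}ᶜ, hopen b, hopen a, hab, Ne.symm hab, by simp, by simp⟩
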